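/- arXiv:math/0610021 — 5 statements merged into one kernel-verified Lean document; each statement's English description precedes it below -/
import Mathlib

section
/- With notation as in the single-set orthonormal decomposition lemma: let Ω_ℓ ⊂ Y_ℓ be a subset, and suppose α: X → ℂ is square-integrable and supported on the set {x ∈ X : ρ(x) ∉ Ω_ℓ}. Then ∑_{φ∈B_ℓ*} |∫_X α(x)φ(ρ(x))dμ(x)|² ≥ (ν(Ω_ℓ)/ν(Y_ℓ∖Ω_ℓ)) · |∫_X α dμ|². -/
open MeasureTheory Finset ComplexConjugate

/-!
Put `T y = ∫_{ρ = y} α`, so that every coefficient `∫ α φ(ρ)` equals `∑_y T y φ y`. Since `B` is an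
orthonormal basis of `L²(Y, ν)`, Parseval gives `∑_{φ ∈ B} |∑_y T y φ y|² = ∑_y |T y|² / ν y`, and
the term `φ = 1` is `|∫ α|²`. As `T` vanishes on `Ω`, Cauchy–Schwarz gives
`|∫ α|² ≤ ν(Y ∖ Ω) ∑_y |T y|² / ν y`, and `ν(Ω) = 1 - ν(Y ∖ Ω)` finishes the proof.
-/

section WeightedL2

variable {Y : Type*} [Fintype Y]

/-- `f ↦ √ν · f` identifies `L²(Y, ν)` isometrically with `EuclideanSpace ℂ Y`. -/
noncomputable def weightedL2Embedding (ν : Y → ℝ) (φ : Y → ℂ) : EuclideanSpace ℂ Y :=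
  WithLp.toLp 2 fun y => (√(ν y) : ℂ) * φ y

lemma inner_weightedL2Embedding {ν : Y → ℝ} (hν : ∀ y, 0 ≤ ν y) (φ ψ : Y → ℂ) :
    inner ℂ (weightedL2Embedding ν φ) (weightedL2Embedding ν ψ)
      = ∑ y, (ν y : ℂ) * ψ y * conj (φ y) := by
  simp only [weightedL2Embedding, PiLp.inner_apply, RCLike.inner_apply, map_mul,
    Complex.conj_ofReal]
  refine sum_congr rfl fun y _ => ?_
  have hsq : (√(ν y) : ℂ) * √(ν y) = ν y := by
    rw [← Complex.ofReal_mul, Real.mul_self_sqrt (hν y)]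
  linear_combination ψ y * conj (φ y) * hsq

lemma orthonormal_weightedL2Embedding [DecidableEq (Y → ℂ)] {ν : Y → ℝ} (hν : ∀ y, 0 ≤ ν y)
    {B : Finset (Y → ℂ)}
    (horth : ∀ φ ∈ B, ∀ ψ ∈ B, ∑ y, (ν y : ℂ) * φ y * conj (ψ y) = if φ = ψ then 1 else 0) :
    Orthonormal ℂ fun φ : B => weightedL2Embedding ν φ := by
  rw [orthonormal_iff_ite]
  intro φ ψ
  rw [inner_weightedL2Embedding hν, horth ψ ψ.2 φ φ.2]
  exact if_congr (Subtype.coe_inj.trans eq_comm) rfl rfl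

/-- Parseval's identity in `L²(Y, ν)` for the function `conj c / ν`. -/
lemma sum_norm_sum_mul_sq_eq_sum_norm_sq_div {ν : Y → ℝ} (hν : ∀ y, 0 < ν y) {B : Finset (Y → ℂ)}
    (hB : Orthonormal ℂ fun φ : B => weightedL2Embedding ν φ)
    (hcard : B.card = Fintype.card Y) (c : Y → ℂ) :
    ∑ φ ∈ B, ‖∑ y, c y * φ y‖ ^ 2 = ∑ y, ‖c y‖ ^ 2 / ν y := by
  have hspan := hB.linearIndependent.span_eq_top_of_card_eq_finrank'
    (by rw [Fintype.card_coe, hcard, finrank_euclideanSpace])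
  let b := OrthonormalBasis.mk hB hspan.ge
  let v : EuclideanSpace ℂ Y := WithLp.toLp 2 fun y => conj (c y) / (√(ν y) : ℂ)
  have hsqrt : ∀ y, (√(ν y) : ℂ) ≠ 0 := fun y => by
    exact_mod_cast (Real.sqrt_pos.mpr (hν y)).ne'
  have hinner : ∀ φ : B, inner ℂ (b φ) v = conj (∑ y, c y * (φ : Y → ℂ) y) := fun φ => by
    simp only [b, v, OrthonormalBasis.coe_mk, weightedL2Embedding, PiLp.inner_apply,
      RCLike.inner_apply, map_mul, map_sum, Complex.conj_ofReal]
    refine sum_congr rfl fun y _ => ?_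
    field_simp [hsqrt y]
  have hnorm : ‖v‖ ^ 2 = ∑ y, ‖c y‖ ^ 2 / ν y := by
    simp only [v, EuclideanSpace.norm_sq_eq, norm_div, RCLike.norm_conj, div_pow,
      Complex.norm_real, Real.norm_eq_abs, sq_abs, Real.sq_sqrt (hν _).le]
  rw [← hnorm, ← b.sum_sq_norm_inner_right v, ← sum_coe_sort B]
  simp only [hinner, RCLike.norm_conj]

end WeightedL2

lemma integral_mul_comp_eq_sum_setIntegral {X Y 𝕜 : Type*} [MeasurableSpace X] {μ : Measure X}
    [Fintype Y] [RCLike 𝕜] {ρ : X → Y} (hρ : ∀ y, MeasurableSet {x | ρ x = y}) {α : X → 𝕜}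
    (hα : Integrable α μ) (φ : Y → 𝕜) :
    ∫ x, α x * φ (ρ x) ∂μ = ∑ y, (∫ x in {x | ρ x = y}, α x ∂μ) * φ y := by
  have hcover : (⋃ y, {x | ρ x = y}) = Set.univ := Set.iUnion_eq_univ_iff.mpr fun x => ⟨ρ x, rfl⟩
  have hdisj : Pairwise fun y y' => Disjoint {x | ρ x = y} {x | ρ x = y'} := fun y y' hne =>
    Set.disjoint_left.mpr fun x hx hx' => hne (hx.symm.trans hx')
  rw [← setIntegral_univ, ← hcover,
    integral_iUnion_fintype hρ hdisj fun y =>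
      (hα.mul_const (φ y)).integrableOn.congr_fun (fun x hx => by rw [hx]) (hρ y)]
  refine sum_congr rfl fun y _ => ?_
  rw [setIntegral_congr_fun (hρ y) fun x hx => by rw [hx], integral_mul_const]

lemma norm_sum_sq_le_sum_mul_sum_norm_sq_div {Y E : Type*} [Fintype Y] [SeminormedAddCommGroup E]
    {ν : Y → ℝ} (hν : ∀ y, 0 < ν y) {s : Finset Y} {T : Y → E} (hT : ∀ y ∉ s, T y = 0) :
    ‖∑ y, T y‖ ^ 2 ≤ (∑ y ∈ s, ν y) * ∑ y, ‖T y‖ ^ 2 / ν y := by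
  have hsum : ∑ y, T y = ∑ y ∈ s, T y :=
    (sum_subset (subset_univ s) fun y _ hy => hT y hy).symm
  have hterm : ∀ y, 0 ≤ ‖T y‖ ^ 2 / ν y := fun y => div_nonneg (sq_nonneg _) (hν y).le
  calc ‖∑ y, T y‖ ^ 2 ≤ (∑ y ∈ s, ‖T y‖) ^ 2 := by
        rw [hsum]; gcongr; exact norm_sum_le _ _
    _ ≤ (∑ y ∈ s, ν y) * ∑ y ∈ s, ‖T y‖ ^ 2 / ν y :=
        sum_sq_le_sum_mul_sum_of_sq_le_mul s (fun y _ => (hν y).le) (fun y _ => hterm y)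
          fun y _ => by rw [mul_div_cancel₀ _ (hν y).ne']
    _ ≤ (∑ y ∈ s, ν y) * ∑ y, ‖T y‖ ^ 2 / ν y :=
        mul_le_mul_of_nonneg_left
          (sum_le_sum_of_subset_of_nonneg (subset_univ s) fun y _ _ => hterm y)
          (sum_nonneg fun y _ => (hν y).le)

lemma div_mul_le_sub_of_le_mul {a b s q : ℝ} (hab : a + b = 1) (hb : 0 ≤ b) (hq : 0 ≤ q)
    (hs : s ≤ b * q) : a / b * s ≤ q - s := by
  rcases hb.eq_or_lt with rfl | hb
  · simp only [div_zero, zero_mul, sub_nonneg]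
    linarith
  · rw [div_mul_eq_mul_div, div_le_iff₀ hb, eq_sub_of_add_eq hab]
    linear_combination hs

theorem large_sieve_single_lower_bound_general
    {X : Type*} [MeasurableSpace X] (μ : Measure X) [IsFiniteMeasure μ]
    {Y : Type*} [Fintype Y] [DecidableEq Y] [DecidableEq (Y → ℂ)]
    (ν : Y → ℝ) (hνpos : ∀ y, 0 < ν y) (hνsum : ∑ y, ν y = 1)
    (ρ : X → Y) (hρ : ∀ y, MeasurableSet {x | ρ x = y})
    (B : Finset (Y → ℂ)) (h1B : (1 : Y → ℂ) ∈ B)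
    (hcard : B.card = Fintype.card Y)
    (horth : ∀ φ ∈ B, ∀ ψ ∈ B,
      ∑ y, (ν y : ℂ) * φ y * (starRingEnd ℂ) (ψ y) = if φ = ψ then 1 else 0)
    (Ω : Finset Y)
    (α : X → ℂ) (hα : MemLp α 2 μ)
    (hsupp : ∀ x, ρ x ∈ Ω → α x = 0) :
    ((∑ y ∈ Ω, ν y) / (∑ y ∈ Ωᶜ, ν y)) * ‖∫ x, α x ∂μ‖ ^ 2
      ≤ ∑ φ ∈ B.erase 1, ‖∫ x, α x * φ (ρ x) ∂μ‖ ^ 2 := by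
  set T : Y → ℂ := fun y => ∫ x in {x | ρ x = y}, α x ∂μ
  have hdecomp : ∀ φ : Y → ℂ, ∫ x, α x * φ (ρ x) ∂μ = ∑ y, T y * φ y :=
    integral_mul_comp_eq_sum_setIntegral hρ (hα.integrable one_le_two)
  have hmass : ∫ x, α x ∂μ = ∑ y, T y := by simpa using hdecomp 1
  have hT : ∀ y ∉ Ωᶜ, T y = 0 := fun y hy =>
    setIntegral_eq_zero_of_forall_eq_zero fun x hx =>
      hsupp x (by rw [show ρ x = y from hx]; simpa using hy)
  have hparseval := sum_norm_sum_mul_sq_eq_sum_norm_sq_div hνpos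
    (orthonormal_weightedL2Embedding (fun y => (hνpos y).le) horth) hcard T
  simp only [sum_erase_eq_sub h1B, hdecomp, hparseval, hmass, Pi.one_apply, mul_one]
  exact div_mul_le_sub_of_le_mul (by rw [sum_add_sum_compl, hνsum])
    (sum_nonneg fun y _ => (hνpos y).le)
    (sum_nonneg fun y _ => div_nonneg (sq_nonneg _) (hνpos y).le)
    (norm_sum_sq_le_sum_mul_sum_norm_sq_div hνpos hT)

/-- Single-prime lower bound lemma (`lm-2b`, case of one prime, of Kowalski,
"The principle of the large sieve"): if `α` is supported on the sifted set, then
`∑_{φ∈B*} |∫ α φ(ρ x)|² ≥ (ν(Ω)/ν(Y∖Ω)) |∫ α|²`. -/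
theorem large_sieve_single_lower_bound
    {X : Type*} [MeasurableSpace X] (μ : Measure X) [IsFiniteMeasure μ]
    {Y : Type*} [Fintype Y] [DecidableEq Y] [DecidableEq (Y → ℂ)]
    (ν : Y → ℝ) (hνpos : ∀ y, 0 < ν y) (hνsum : ∑ y, ν y = 1)
    (ρ : X → Y) (hρ : ∀ y, MeasurableSet {x | ρ x = y})
    (B : Finset (Y → ℂ)) (h1B : (1 : Y → ℂ) ∈ B)
    (hcard : B.card = Fintype.card Y)
    (horth : ∀ φ ∈ B, ∀ ψ ∈ B,
      ∑ y, (ν y : ℂ) * φ y * (starRingEnd ℂ) (ψ y) = if φ = ψ then 1 else 0)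
    (Ω : Finset Y) (hΩ : Ω ≠ Finset.univ)
    (α : X → ℂ) (hα : MemLp α 2 μ)
    (hsupp : ∀ x, ρ x ∈ Ω → α x = 0) :
    ((∑ y ∈ Ω, ν y) / (∑ y ∈ Ωᶜ, ν y)) * ‖∫ x, α x ∂μ‖ ^ 2
      ≤ ∑ φ ∈ B.erase 1, ‖∫ x, α x * φ (ρ x) ∂μ‖ ^ 2 :=
  large_sieve_single_lower_bound_general μ ν hνpos hνsum ρ hρ B h1B hcard horth Ω α hα hsupp
end

section
/- Abstract large sieve inequality: let (X,μ) be a finite measure space, Λ a finite index set, and for each ℓ∈Λ a map ρ_ℓ: X → Y_ℓ to a finite set with probability density ν_ℓ > 0. Let L be a collection of subsets of Λ containing all singletons of a set L* and closed under the condition that elements of members of L are in L*. Define the large sieve constant Δ as the least constant such that ∑_{m∈L} ∑_{φ∈B_m*} |∫_X α(x)φ(ρ_m(x))dμ(x)|² ≤ Δ ∫_X |α|² dμ for all α ∈ L²(X,μ), where B_m* is the product of the bases B_ℓ* for ℓ∈m. Then for any sieving sets Ω_ℓ ⊊ Y_ℓ (ℓ∈L*), the sifted set S = {x ∈ X : ρ_ℓ(x)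 ∉ Ω_ℓ for all ℓ∈L*} satisfies μ(S) ≤ Δ·H⁻¹ where H = ∑_{m∈L} ∏_{ℓ∈m} ν(Ω_ℓ)/(1−ν(Ω_ℓ)). -/
open MeasureTheory Finset ComplexConjugate

/-!
For `ℓ ∈ L*` put `P_ℓ = ν_ℓ(Ω_ℓ)` and let `g_ℓ` be `-1` on `Ω_ℓ` and `P_ℓ / (1 - P_ℓ)` off it.
Then `g_ℓ` has mean zero, so it expands in `B_ℓ*` alone, and by Parseval the squared
coefficients sum to `‖g_ℓ‖² = P_ℓ / (1 - P_ℓ)`. For `m ∈ L` the product `∏_{ℓ ∈ m} g_ℓ ∘ ρ_ℓ`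
equals `H_m = ∏_{ℓ ∈ m} P_ℓ / (1 - P_ℓ)` on the sifted set `S`, and it expands in the functions
`φ ∘ ρ_m` (`φ ∈ B_m*`) with squared coefficients summing to `H_m`. Integrating over `S` and
applying Cauchy–Schwarz gives `μ(S)² H_m ≤ ∑_{φ ∈ B_m*} |∫_S φ ∘ ρ_m dμ|²`. Summing over `m` and
applying the large sieve inequality to `α = 1_S` gives `μ(S)² H ≤ Δ μ(S)`.
-/

section WeightedL2

variable {Z : Type*} [Fintype Z]

def weightedInner (ν : Z → ℝ) (f g : Z → ℂ) : ℂ := ∑ y, (ν y : ℂ) * f y * conj (g y)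

variable {ν : Z → ℝ} {B : Finset (Z → ℂ)} [DecidableEq Z] [DecidableEq (Z → ℂ)]

/-- By `hcard` the matrix `(φ y)` is square, so its right inverse `(ν y * conj (φ y))` given by
`horth` is also a left inverse. -/
lemma sum_weight_mul_conj_mul_eq_ite (hcard : #B = Fintype.card Z)
    (horth : ∀ φ ∈ B, ∀ ψ ∈ B, weightedInner ν φ ψ = if φ = ψ then 1 else 0) (y y' : Z) :
    ∑ φ ∈ B, (ν y : ℂ) * conj (φ y) * φ y' = if y = y' then 1 else 0 := by
  let M : Matrix B Z ℂ := .of fun φ y => φ.1 y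
  let N : Matrix Z B ℂ := .of fun y φ => (ν y : ℂ) * conj (φ.1 y)
  have hMN : M * N = 1 := by
    ext φ ψ
    convert horth φ.1 φ.2 ψ.1 ψ.2 using 1
    · simp only [M, N, Matrix.mul_apply, Matrix.of_apply, weightedInner]
      exact sum_congr rfl fun _ _ => by ring
    · exact Matrix.one_apply.trans (if_congr Subtype.ext_iff rfl rfl)
  have hNM : N * M = 1 :=
    (Matrix.mul_eq_one_comm_of_equiv (Fintype.equivOfCardEq (by simp [hcard]))).mp hMN
  rw [← Matrix.one_apply, ← hNM, Matrix.mul_apply, ← sum_coe_sort B]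
  rfl

lemma sum_weightedInner_mul_apply (hcard : #B = Fintype.card Z)
    (horth : ∀ φ ∈ B, ∀ ψ ∈ B, weightedInner ν φ ψ = if φ = ψ then 1 else 0)
    (g : Z → ℂ) (y' : Z) :
    ∑ φ ∈ B, weightedInner ν g φ * φ y' = g y' := by
  calc ∑ φ ∈ B, weightedInner ν g φ * φ y'
      = ∑ y, g y * ∑ φ ∈ B, (ν y : ℂ) * conj (φ y) * φ y' := by
        simp only [weightedInner, sum_mul, mul_sum]
        rw [sum_comm]
        exact sum_congr rfl fun _ _ => sum_congr rfl fun _ _ => by ring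
    _ = g y' := by simp [sum_weight_mul_conj_mul_eq_ite hcard horth]

lemma sum_norm_sq_weightedInner (hcard : #B = Fintype.card Z)
    (horth : ∀ φ ∈ B, ∀ ψ ∈ B, weightedInner ν φ ψ = if φ = ψ then 1 else 0) (g : Z → ℂ) :
    ∑ φ ∈ B, ‖weightedInner ν g φ‖ ^ 2 = ∑ y, ν y * ‖g y‖ ^ 2 := by
  apply Complex.ofReal_injective
  calc ((∑ φ ∈ B, ‖weightedInner ν g φ‖ ^ 2 : ℝ) : ℂ)
      = ∑ φ ∈ B, weightedInner ν g φ * conj (weightedInner ν g φ) := by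
        push_cast
        simp [Complex.mul_conj, Complex.normSq_eq_norm_sq]
    _ = ∑ y, (ν y : ℂ) * conj (g y) * ∑ φ ∈ B, weightedInner ν g φ * φ y := by
        simp only [weightedInner, map_sum, map_mul, Complex.conj_ofReal, Complex.conj_conj,
          mul_sum]
        rw [sum_comm]
        exact sum_congr rfl fun _ _ => sum_congr rfl fun _ _ => by ring
    _ = ((∑ y, ν y * ‖g y‖ ^ 2 : ℝ) : ℂ) := by
        simp only [sum_weightedInner_mul_apply hcard horth]
        push_cast
        refine sum_congr rfl fun y _ => ?_
        rw [mul_assoc, mul_comm (conj _), Complex.mul_conj, Complex.normSq_eq_norm_sq]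
        push_cast
        ring

end WeightedL2

section SieveWeight

variable {Z : Type*} [Fintype Z] {ν : Z → ℝ}

lemma sum_lt_one_of_ne_univ (hpos : ∀ y, 0 < ν y) (hsum : ∑ y, ν y = 1) {Ω : Finset Z}
    (hΩ : Ω ≠ univ) : ∑ y ∈ Ω, ν y < 1 := by
  obtain ⟨y₀, hy₀⟩ : ∃ y₀, y₀ ∉ Ω := by simpa [eq_univ_iff_forall] using hΩ
  rw [← hsum]
  exact sum_lt_sum_of_subset (subset_univ Ω) (mem_univ y₀) hy₀ (hpos y₀) fun y _ _ => (hpos y).le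

variable [DecidableEq Z]

variable (ν) in
noncomputable def sieveWeight (Ω : Finset Z) (y : Z) : ℝ :=
  if y ∈ Ω then -1 else (∑ y ∈ Ω, ν y) / (1 - ∑ y ∈ Ω, ν y)

lemma sum_mul_comp_sieveWeight (hsum : ∑ y, ν y = 1) (Ω : Finset Z) (f : ℝ → ℝ) :
    ∑ y, ν y * f (sieveWeight ν Ω y) =
      (∑ y ∈ Ω, ν y) * f (-1) +
        (1 - ∑ y ∈ Ω, ν y) * f ((∑ y ∈ Ω, ν y) / (1 - ∑ y ∈ Ω, ν y)) := by
  have hcompl : ∑ y ∈ Ωᶜ, ν y = 1 - ∑ y ∈ Ω, ν y := by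
    rw [← hsum, ← sum_add_sum_compl Ω ν]; ring
  generalize hr : (∑ y ∈ Ω, ν y) / (1 - ∑ y ∈ Ω, ν y) = r
  rw [← sum_add_sum_compl Ω, ← hcompl, sum_mul, sum_mul]
  congr 1 <;> refine sum_congr rfl fun y hy => ?_
  · simp [sieveWeight, hy]
  · simp [sieveWeight, mem_compl.mp hy, hr]

lemma sum_mul_sieveWeight (hsum : ∑ y, ν y = 1) {Ω : Finset Z} (hΩ : ∑ y ∈ Ω, ν y ≠ 1) :
    ∑ y, ν y * sieveWeight ν Ω y = 0 := by
  have h := sum_mul_comp_sieveWeight hsum Ω id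
  have : 1 - ∑ y ∈ Ω, ν y ≠ 0 := sub_ne_zero.mpr hΩ.symm
  simp only [id] at h
  rw [h]
  field_simp
  ring

lemma sum_mul_sieveWeight_sq (hsum : ∑ y, ν y = 1) {Ω : Finset Z} (hΩ : ∑ y ∈ Ω, ν y ≠ 1) :
    ∑ y, ν y * sieveWeight ν Ω y ^ 2 = (∑ y ∈ Ω, ν y) / (1 - ∑ y ∈ Ω, ν y) := by
  have h := sum_mul_comp_sieveWeight hsum Ω (· ^ 2)
  have : 1 - ∑ y ∈ Ω, ν y ≠ 0 := sub_ne_zero.mpr hΩ.symm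
  rw [h]
  field_simp
  ring

end SieveWeight

section Coefficients

variable {Z : Type*} [Fintype Z] [DecidableEq Z] [DecidableEq (Z → ℂ)] {ν : Z → ℝ}
  {B : Finset (Z → ℂ)}

lemma exists_coeffs_sieveWeight (hsum : ∑ y, ν y = 1) (hcard : #B = Fintype.card Z)
    (horth : ∀ φ ∈ B, ∀ ψ ∈ B, weightedInner ν φ ψ = if φ = ψ then 1 else 0)
    {Ω : Finset Z} (hΩ : ∑ y ∈ Ω, ν y ≠ 1) :
    ∃ c : (Z → ℂ) → ℂ,
      ∑ φ ∈ B.erase 1, ‖c φ‖ ^ 2 = (∑ y ∈ Ω, ν y) / (1 - ∑ y ∈ Ω, ν y) ∧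
      ∀ y ∉ Ω, ∑ φ ∈ B.erase 1, c φ * φ y = (((∑ y ∈ Ω, ν y) / (1 - ∑ y ∈ Ω, ν y) : ℝ) : ℂ) := by
  let g : Z → ℂ := fun y => (sieveWeight ν Ω y : ℂ)
  have hg1 : weightedInner ν g 1 = 0 := by
    simp only [weightedInner, g, Pi.one_apply, map_one, mul_one]
    exact_mod_cast sum_mul_sieveWeight hsum hΩ
  refine ⟨weightedInner ν g, ?_, fun y hy => ?_⟩
  · rw [sum_erase _ (by simp [hg1]), sum_norm_sq_weightedInner hcard horth]
    simpa [g, Complex.norm_real, sq_abs] using sum_mul_sieveWeight_sq hsum hΩ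
  · rw [sum_erase _ (by simp [hg1]), sum_weightedInner_mul_apply hcard horth]
    simp [g, sieveWeight, hy]

end Coefficients


lemma Finset.sum_piFinset_ite_prod {ι : Type*} [Fintype ι] [DecidableEq ι] {β : ι → Type*}
    {R : Type*} [CommSemiring R]
    (m : Finset ι) (t : ∀ i, Finset (β i)) (d : ∀ i, β i) (f : ∀ i, β i → R) :
    ∑ b ∈ Fintype.piFinset (fun i => if i ∈ m then t i else {d i}), ∏ i ∈ m, f i (b i) =
      ∏ i ∈ m, ∑ φ ∈ t i, f i φ := by
  let F : ∀ i, β i → R := fun i φ => if i ∈ m then f i φ else 1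
  have hF : ∀ b : ∀ i, β i, ∏ i ∈ m, f i (b i) = ∏ i, F i (b i) := fun b => by
    simp [F, prod_ite_mem]
  rw [sum_congr rfl fun b _ => hF b, ← prod_univ_sum, ← prod_subset (subset_univ m)]
  · exact prod_congr rfl fun i hi => by simp [F, hi]
  · intro i _ hi
    simp [F, hi]

lemma sq_mul_le_sum_norm_sq_of_sum_mul_eq {β : Type*} {s : Finset β} {a I : β → ℂ} {t Q : ℝ}
    (ha : ∑ b ∈ s, ‖a b‖ ^ 2 = Q) (hI : ∑ b ∈ s, a b * I b = t * Q) :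
    t ^ 2 * Q ≤ ∑ b ∈ s, ‖I b‖ ^ 2 := by
  have hQ : 0 ≤ Q := ha ▸ sum_nonneg fun _ _ => sq_nonneg _
  have hcs : (t * Q) ^ 2 ≤ Q * ∑ b ∈ s, ‖I b‖ ^ 2 :=
    calc (t * Q) ^ 2 = ‖∑ b ∈ s, a b * I b‖ ^ 2 := by
          rw [hI, ← Complex.ofReal_mul, Complex.norm_real, Real.norm_eq_abs, sq_abs]
      _ ≤ (∑ b ∈ s, ‖a b‖ * ‖I b‖) ^ 2 := by
          gcongr
          exact (norm_sum_le _ _).trans_eq (by simp only [norm_mul])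
      _ ≤ Q * ∑ b ∈ s, ‖I b‖ ^ 2 := ha ▸ sum_mul_sq_le_sq_mul_sq s _ _
  rcases hQ.eq_or_lt with rfl | hQ
  · simpa using sum_nonneg fun b _ => sq_nonneg ‖I b‖
  · nlinarith

lemma measurable_comp_of_measurableSet_fiber {X Z E : Type*} [MeasurableSpace X] [Countable Z]
    [MeasurableSpace E] {r : X → Z} (hr : ∀ y, MeasurableSet {x | r x = y}) (f : Z → E) :
    Measurable fun x => f (r x) :=
  letI : MeasurableSpace Z := ⊤
  measurable_from_top.comp (measurable_to_countable' hr)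

section Duality

variable {X : Type*} [MeasurableSpace X] {μ : Measure X} [IsFiniteMeasure μ]
  {ι : Type*} {Y : ι → Type*} [∀ ℓ, Fintype (Y ℓ)]
  {ρ : ∀ ℓ, X → Y ℓ}

lemma integrable_prod_comp (hρ : ∀ ℓ y, MeasurableSet {x | ρ ℓ x = y}) (m : Finset ι)
    (b : ∀ ℓ, Y ℓ → ℂ) : Integrable (fun x => ∏ ℓ ∈ m, b ℓ (ρ ℓ x)) μ := by
  choose C hC using fun ℓ => Finite.exists_le fun y => ‖b ℓ y‖
  refine .of_bound (Finset.measurable_prod m fun ℓ _ =>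
    measurable_comp_of_measurableSet_fiber (hρ ℓ) (b ℓ)).aestronglyMeasurable
    (∏ ℓ ∈ m, C ℓ) (ae_of_all _ fun x => ?_)
  rw [norm_prod]
  exact prod_le_prod (fun _ _ => norm_nonneg _) fun ℓ _ => hC ℓ _

lemma sq_measure_mul_prod_le_sum_norm_sq [Fintype ι] [DecidableEq ι]
    (hρ : ∀ ℓ y, MeasurableSet {x | ρ ℓ x = y}) {S : Set X} (hS : MeasurableSet S) (m : Finset ι) (t : ∀ ℓ, Finset (Y ℓ → ℂ))
    (d : ∀ ℓ, Y ℓ → ℂ) (c : ∀ ℓ, (Y ℓ → ℂ) → ℂ) (q : ι → ℝ)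
    (hc : ∀ ℓ ∈ m, ∑ φ ∈ t ℓ, ‖c ℓ φ‖ ^ 2 = q ℓ)
    (hcS : ∀ ℓ ∈ m, ∀ x ∈ S, ∑ φ ∈ t ℓ, c ℓ φ * φ (ρ ℓ x) = q ℓ) :
    (μ S).toReal ^ 2 * ∏ ℓ ∈ m, q ℓ ≤
      ∑ b ∈ Fintype.piFinset (fun ℓ => if ℓ ∈ m then t ℓ else {d ℓ}),
        ‖∫ x, S.indicator 1 x * ∏ ℓ ∈ m, b ℓ (ρ ℓ x) ∂μ‖ ^ 2 := by
  refine sq_mul_le_sum_norm_sq_of_sum_mul_eq (a := fun b => ∏ ℓ ∈ m, c ℓ (b ℓ)) ?_ ?_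
  · simp only [norm_prod, ← prod_pow]
    rw [sum_piFinset_ite_prod m t d fun ℓ φ => ‖c ℓ φ‖ ^ 2]
    exact prod_congr rfl hc
  have hpt : ∀ x, ∑ b ∈ Fintype.piFinset (fun ℓ => if ℓ ∈ m then t ℓ else {d ℓ}),
      (∏ ℓ ∈ m, c ℓ (b ℓ)) * (S.indicator 1 x * ∏ ℓ ∈ m, b ℓ (ρ ℓ x)) =
        S.indicator (fun _ => ((∏ ℓ ∈ m, q ℓ : ℝ) : ℂ)) x := by
    intro x
    simp only [mul_left_comm _ (S.indicator 1 x), ← mul_sum, ← prod_mul_distrib]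
    rw [sum_piFinset_ite_prod m t d fun ℓ φ => c ℓ φ * φ (ρ ℓ x)]
    by_cases hx : x ∈ S
    · simp [hx, prod_congr rfl fun ℓ hℓ => hcS ℓ hℓ x hx]
    · simp [hx]
  calc ∑ b ∈ Fintype.piFinset (fun ℓ => if ℓ ∈ m then t ℓ else {d ℓ}),
        (∏ ℓ ∈ m, c ℓ (b ℓ)) * ∫ x, S.indicator 1 x * ∏ ℓ ∈ m, b ℓ (ρ ℓ x) ∂μ
      = ∫ x, S.indicator (fun _ => ((∏ ℓ ∈ m, q ℓ : ℝ) : ℂ)) x ∂μ := by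
        simp only [← integral_const_mul, ← hpt]
        refine (integral_finsetSum _ fun b _ => ?_).symm
        exact (((integrable_prod_comp hρ m b).indicator hS).congr (ae_of_all _ fun x => by
          by_cases hx : x ∈ S <;> simp [hx])).const_mul _
    _ = (μ S).toReal * ∏ ℓ ∈ m, q ℓ := by
        rw [integral_indicator_const _ hS, measureReal_def, Complex.real_smul]

end Duality

theorem abstract_large_sieve_general
    {X : Type*} [MeasurableSpace X] (μ : Measure X) [IsFiniteMeasure μ]
    {ι : Type*} [Fintype ι] [DecidableEq ι]
    (Y : ι → Type*) [∀ ℓ, Fintype (Y ℓ)]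
    [∀ ℓ, DecidableEq (Y ℓ → ℂ)]
    (ν : ∀ ℓ, Y ℓ → ℝ) (hνpos : ∀ ℓ y, 0 < ν ℓ y) (hνsum : ∀ ℓ, ∑ y, ν ℓ y = 1)
    (ρ : ∀ ℓ, X → Y ℓ) (hρ : ∀ ℓ y, MeasurableSet {x | ρ ℓ x = y})
    -- orthonormal bases of `L²(Y ℓ, ν ℓ)` containing the constant function 1
    (B : ∀ ℓ, Finset (Y ℓ → ℂ))
    (hcard : ∀ ℓ, (B ℓ).card = Fintype.card (Y ℓ))
    (horth : ∀ ℓ, ∀ φ ∈ B ℓ, ∀ ψ ∈ B ℓ,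
      ∑ y, (ν ℓ y : ℂ) * φ y * (starRingEnd ℂ) (ψ y) = if φ = ψ then 1 else 0)
    -- sieve support
    (Lstar : Finset ι) (L : Finset (Finset ι))
    (hL2 : ∀ m ∈ L, ∀ ℓ ∈ m, ℓ ∈ Lstar)
    -- the large sieve constant
    (Δ : ℝ) (hΔ0 : 0 ≤ Δ)
    (hΔ : ∀ α : X → ℂ, MemLp α 2 μ →
      ∑ m ∈ L, ∑ b ∈ Fintype.piFinset
          (fun ℓ => if ℓ ∈ m then (B ℓ).erase 1 else {(1 : Y ℓ → ℂ)}),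
        ‖∫ x, α x * ∏ ℓ ∈ m, b ℓ (ρ ℓ x) ∂μ‖ ^ 2
        ≤ Δ * ∫ x, ‖α x‖ ^ 2 ∂μ)
    -- sieving sets
    (Ω : ∀ ℓ, Finset (Y ℓ)) (hΩ : ∀ ℓ ∈ Lstar, Ω ℓ ≠ Finset.univ) :
    (μ {x | ∀ ℓ ∈ Lstar, ρ ℓ x ∉ Ω ℓ}).toReal *
        (∑ m ∈ L, ∏ ℓ ∈ m,
          (∑ y ∈ Ω ℓ, ν ℓ y) / (1 - ∑ y ∈ Ω ℓ, ν ℓ y))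
      ≤ Δ := by
  classical
  set S := {x | ∀ ℓ ∈ Lstar, ρ ℓ x ∉ Ω ℓ}
  have hS : MeasurableSet S := by
    simp only [S, Set.ofPred_forall]
    exact .iInter fun ℓ => .iInter fun _ => measurableSet_setOfPred.mpr
      (measurable_comp_of_measurableSet_fiber (hρ ℓ) fun y => y ∉ Ω ℓ)
  choose! c hc hcΩ using fun ℓ (hℓ : ℓ ∈ Lstar) => exists_coeffs_sieveWeight (hνsum ℓ)
    (hcard ℓ) (horth ℓ) (sum_lt_one_of_ne_univ (hνpos ℓ) (hνsum ℓ) (hΩ ℓ hℓ)).ne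
  have hα : MemLp (S.indicator (1 : X → ℂ)) 2 μ :=
    memLp_indicator_const 2 hS 1 (.inr (measure_ne_top μ S))
  have hnorm : ∫ x, ‖S.indicator (1 : X → ℂ) x‖ ^ 2 ∂μ = (μ S).toReal := by
    have h : (fun x => ‖S.indicator (1 : X → ℂ) x‖ ^ 2) = S.indicator 1 := by
      funext x
      by_cases hx : x ∈ S <;> simp [hx]
    rw [h, integral_indicator_one hS, measureReal_def]
  have hsq : (μ S).toReal ^ 2 * ∑ m ∈ L, ∏ ℓ ∈ m,
      (∑ y ∈ Ω ℓ, ν ℓ y) / (1 - ∑ y ∈ Ω ℓ, ν ℓ y) ≤ Δ * (μ S).toReal := by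
    rw [mul_sum]
    refine (sum_le_sum fun m hm => ?_).trans ((hΔ _ hα).trans_eq (by rw [hnorm]))
    exact sq_measure_mul_prod_le_sum_norm_sq hρ hS m _ _ c _ (fun ℓ hℓ => hc ℓ (hL2 m hm ℓ hℓ))
      fun ℓ hℓ x hx => hcΩ ℓ (hL2 m hm ℓ hℓ) _ (hx ℓ (hL2 m hm ℓ hℓ))
  rcases (ENNReal.toReal_nonneg (a := μ S)).eq_or_lt with h0 | hpos
  · simpa [← h0] using hΔ0
  · nlinarith

/-- Abstract large sieve inequality (Proposition 2.2 / `pr-comb-sieve` of Kowalski,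
"The principle of the large sieve").  The conclusion `μ(S)·H ≤ Δ` is the
(division-free form of) `μ(S) ≤ Δ·H⁻¹`. -/
theorem abstract_large_sieve
    {X : Type*} [MeasurableSpace X] (μ : Measure X) [IsFiniteMeasure μ]
    {ι : Type*} [Fintype ι] [DecidableEq ι]
    (Y : ι → Type*) [∀ ℓ, Fintype (Y ℓ)] [∀ ℓ, DecidableEq (Y ℓ)]
    [∀ ℓ, DecidableEq (Y ℓ → ℂ)]
    (ν : ∀ ℓ, Y ℓ → ℝ) (hνpos : ∀ ℓ y, 0 < ν ℓ y) (hνsum : ∀ ℓ, ∑ y, ν ℓ y = 1)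
    (ρ : ∀ ℓ, X → Y ℓ) (hρ : ∀ ℓ y, MeasurableSet {x | ρ ℓ x = y})
    -- orthonormal bases of `L²(Y ℓ, ν ℓ)` containing the constant function 1
    (B : ∀ ℓ, Finset (Y ℓ → ℂ)) (h1B : ∀ ℓ, (1 : Y ℓ → ℂ) ∈ B ℓ)
    (hcard : ∀ ℓ, (B ℓ).card = Fintype.card (Y ℓ))
    (horth : ∀ ℓ, ∀ φ ∈ B ℓ, ∀ ψ ∈ B ℓ,
      ∑ y, (ν ℓ y : ℂ) * φ y * (starRingEnd ℂ) (ψ y) = if φ = ψ then 1 else 0)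
    -- sieve support
    (Lstar : Finset ι) (L : Finset (Finset ι))
    (hL1 : ∀ ℓ ∈ Lstar, {ℓ} ∈ L)
    (hL2 : ∀ m ∈ L, ∀ ℓ ∈ m, ℓ ∈ Lstar)
    -- the large sieve constant
    (Δ : ℝ) (hΔ0 : 0 ≤ Δ)
    (hΔ : ∀ α : X → ℂ, MemLp α 2 μ →
      ∑ m ∈ L, ∑ b ∈ Fintype.piFinset
          (fun ℓ => if ℓ ∈ m then (B ℓ).erase 1 else {(1 : Y ℓ → ℂ)}),
        ‖∫ x, α x * ∏ ℓ ∈ m, b ℓ (ρ ℓ x) ∂μ‖ ^ 2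
        ≤ Δ * ∫ x, ‖α x‖ ^ 2 ∂μ)
    -- sieving sets
    (Ω : ∀ ℓ, Finset (Y ℓ)) (hΩ : ∀ ℓ ∈ Lstar, Ω ℓ ≠ Finset.univ) :
    (μ {x | ∀ ℓ ∈ Lstar, ρ ℓ x ∉ Ω ℓ}).toReal *
        (∑ m ∈ L, ∏ ℓ ∈ m,
          (∑ y ∈ Ω ℓ, ν ℓ y) / (1 - ∑ y ∈ Ω ℓ, ν ℓ y))
      ≤ Δ :=
  abstract_large_sieve_general μ Y ν hνpos hνsum ρ hρ B hcard horth Lstar L hL2 Δ hΔ0 hΔ Ω hΩ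
end

section
/- Let H be a finite group, H^g a normal subgroup with abelian quotient Γ = H/H^g, α ∈ Γ, and Y the set of conjugacy classes of H mapping to α. For irreducible characters χ_π, χ_τ of H, define ⟨f,g⟩ = (1/|H^g|) ∑_{y♯∈Y} |y♯| f(y♯) conj(g(y♯)). Then ⟨χ_π, χ_τ⟩ = 0 if the restrictions of π and τ to H^g are not isomorphic or if χ_π vanishes identically on Y; otherwise, choosing a character ψ of Γ with π⊗ψ ≅ τ, one has ⟨χ_π, χ_τ⟩ = conj(ψ(α)) · |Γ̂^π|, where Γ̂^π = {ψ ∈ Γ̂ : π ≅ π⊗ψ}. -/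
/-!
Write `Γ̂` for the characters of `H` trivial on `N`, and fix `a` with `aN = α`. Orthogonality of
the characters of the finite abelian group `H/N` gives the coset indicator
`1[yN = aN] = [H : N]⁻¹ ∑_{ψ ∈ Γ̂} conj ψ(a) ψ(y)`. Inserting it, and using
`conj χ_τ(y) = χ_τ(y⁻¹)`, the coset inner product becomes
`∑_{ψ ∈ Γ̂} conj ψ(a) ⟨ψ χ_π, χ_τ⟩_H`. The twist `π ⊗ ψ` is again irreducible (its character
still has norm one), so by Schur orthogonality each inner product is `1` if `τ ≅ π ⊗ ψ` and `0`
otherwise. No `ψ ∈ Γ̂` qualifies when `χ_π ≠ χ_τ` on `N`. If `τ ≅ π ⊗ ψ₀`, the qualifying `ψ`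
form the coset `ψ₀ Γ̂^π`, and they all agree with `ψ₀` on `aN` as soon as `χ_π` does not vanish
there.
-/

open CategoryTheory Finset ComplexConjugate

namespace Module.End

variable {K V : Type*} [Field K] [AddCommGroup V] [Module K V]

lemma isSemisimple_of_pow_eq_one {f : End K V} {n : ℕ} (hn : (n : K) ≠ 0) (hf : f ^ n = 1) :
    f.IsSemisimple :=
  isSemisimple_of_squarefree_aeval_eq_zero
    (Polynomial.separable_X_pow_sub_C 1 hn one_ne_zero).squarefree (by simp [hf])

lemma HasEigenvector.pow_eq_one_of_pow_eq_one {f : End K V} {n : ℕ} (hf : f ^ n = 1) {μ : K} {x : V}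
    (hx : f.HasEigenvector μ x) : μ ^ n = 1 := by
  have h := hx.pow_apply n
  rw [hf, one_apply] at h
  exact smul_left_injective K hx.2 (h.symm.trans (one_smul K x).symm)

variable [FiniteDimensional K V]

open scoped Classical in
lemma trace_eq_sum_finrank_eigenspace_of_isSemisimple [IsAlgClosed K] {f g : End K V}
    (hf : f.IsSemisimple) (c : K → K) (hg : ∀ μ, ∀ x ∈ f.eigenspace μ, g x = c μ • x) :
    LinearMap.trace K V g =
      ∑ μ ∈ f.finite_hasEigenvalue.toFinset, c μ * Module.finrank K (f.eigenspace μ) := by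
  have hint : DirectSum.IsInternal f.eigenspace :=
    (DirectSum.isInternal_submodule_iff_iSupIndep_and_iSup_eq_top _).mpr
      ⟨f.eigenspaces_iSupIndep, hf.iSup_eigenspace_eq_top⟩
  have hmaps : ∀ μ, Set.MapsTo g (f.eigenspace μ) (f.eigenspace μ) := fun μ x hx => by
    rw [SetLike.mem_coe, hg μ x hx]
    exact Submodule.smul_mem _ _ hx
  rw [LinearMap.trace_eq_sum_trace_restrict' hint f.finite_hasEigenvalue hmaps]
  refine sum_congr rfl fun μ _ => ?_
  have hscalar : g.restrict (hmaps μ) = c μ • 1 := by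
    ext x
    exact hg μ x x.2
  rw [hscalar, map_smul, LinearMap.trace_one, smul_eq_mul]

end Module.End

lemma LinearMap.trace_eq_conj_trace_of_mul_eq_one_of_pow_eq_one {V : Type*} [AddCommGroup V]
    [Module ℂ V] [FiniteDimensional ℂ V] {f g : Module.End ℂ V} (hgf : g * f = 1) {n : ℕ}
    (hn : n ≠ 0) (hf : f ^ n = 1) :
    LinearMap.trace ℂ V g = conj (LinearMap.trace ℂ V f) := by
  have hss := Module.End.isSemisimple_of_pow_eq_one (Nat.cast_ne_zero.mpr hn) hf
  -- the eigenvalues of `f` are roots of unity, so `g = f⁻¹` acts on `E_μ` by `μ⁻¹ = conj μ`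
  have hg : ∀ μ, ∀ x ∈ f.eigenspace μ, g x = conj μ • x := by
    intro μ x hx
    rcases eq_or_ne x 0 with rfl | hx0
    · simp
    have hvec : f.HasEigenvector μ x := ⟨hx, hx0⟩
    have hμ := hvec.pow_eq_one_of_pow_eq_one hf
    rw [← Complex.inv_eq_conj (Complex.norm_eq_one_of_pow_eq_one hμ hn), eq_inv_smul_iff₀
      (pow_ne_zero_iff hn |>.mp (hμ ▸ one_ne_zero)), ← map_smul, ← hvec.apply_eq_smul,
      ← Module.End.mul_apply, hgf, Module.End.one_apply]
  rw [Module.End.trace_eq_sum_finrank_eigenspace_of_isSemisimple hss _ hg,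
    Module.End.trace_eq_sum_finrank_eigenspace_of_isSemisimple (g := f) hss (fun μ => μ)
      (fun _ _ hx => Module.End.mem_eigenspace_iff.mp hx), map_sum]
  simp

lemma FDRep.char_inv_eq_conj {G : Type} [Group G] [Finite G] (V : FDRep ℂ G) (g : G) :
    V.character g⁻¹ = conj (V.character g) :=
  LinearMap.trace_eq_conj_trace_of_mul_eq_one_of_pow_eq_one
    (by rw [← map_mul, inv_mul_cancel, map_one]) Nat.card_pos.ne'
    (by rw [← map_pow, pow_card_eq_one', map_one])

lemma MonoidHom.map_inv_eq_conj {G : Type*} [Group G] [Finite G] (ψ : G →* ℂ) (g : G) :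
    ψ g⁻¹ = conj (ψ g) := by
  have hpow : ψ g ^ Nat.card G = 1 := by rw [← map_pow, pow_card_eq_one', map_one]
  rw [map_inv, Complex.inv_eq_conj (Complex.norm_eq_one_of_pow_eq_one hpow Nat.card_pos.ne')]

namespace FDRep

universe u

variable {k G : Type u} [Field k] [Group G]

noncomputable def twist (ψ : G →* k) (V : FDRep k G) : FDRep k G :=
  FDRep.of
    { toFun := fun g => ψ g • V.ρ g
      map_one' := by simp
      map_mul' := fun g h => by rw [map_mul, map_mul, mul_smul_mul_comm] }

lemma char_twist (ψ : G →* k) (V : FDRep k G) (g : G) :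
    (twist ψ V).character g = ψ g * V.character g :=
  map_smul (LinearMap.trace k V) (ψ g) (V.ρ g)

variable [Fintype G] [IsAlgClosed k] [CharZero k]

instance simple_twist (ψ : G →* k) (V : FDRep k G) [Simple V] : Simple (twist ψ V) := by
  rw [simple_iff_char_is_norm_one, ← (simple_iff_char_is_norm_one V).mp ‹_›]
  refine sum_congr rfl fun g _ => ?_
  rw [char_twist, char_twist, mul_mul_mul_comm, ← map_mul,
    mul_inv_cancel, map_one, one_mul]

lemma nonempty_iso_iff_character_eq (V W : FDRep k G) [Simple V] [Simple W] :
    Nonempty (V ≅ W) ↔ V.character = W.character := by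
  classical
  refine ⟨fun ⟨i⟩ => char_iso i, fun h => by_contra fun hVW => ?_⟩
  have : Invertible (Nat.card G : k) := invertibleOfNonzero (NeZero.ne _)
  have h₁ := char_orthonormal V W
  rw [if_neg hVW, h, char_orthonormal W W, if_pos ⟨Iso.refl W⟩] at h₁
  simp at h₁

open scoped Classical in
lemma sum_mul_char_mul_char_inv (ψ : G →* k) (V W : FDRep k G) [Simple V] [Simple W] :
    ∑ g, ψ g * V.character g * W.character g⁻¹ =
      if ∀ g, W.character g = ψ g * V.character g then (Nat.card G : k) else 0 := by
  have : Invertible (Nat.card G : k) := invertibleOfNonzero (NeZero.ne _)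
  have hchar : (twist ψ V).character = W.character ↔ ∀ g, W.character g = ψ g * V.character g := by
    simp only [funext_iff, char_twist, eq_comm]
  have h := char_orthonormal (twist ψ V) W
  simp only [nonempty_iso_iff_character_eq, hchar, char_twist,
    inv_mul_eq_iff_eq_mul₀ (NeZero.ne _)] at h
  rw [h]
  split_ifs <;> simp

end FDRep

instance MonoidHom.finite_complex {G : Type*} [Group G] [Finite G] : Finite (G →* ℂ) := by
  classical
  refine Finite.of_injective
    (fun ψ : G →* ℂ => fun g => (⟨ψ g, ?_⟩ : Polynomial.nthRootsFinset (Nat.card G) (1 : ℂ)))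
    fun ψ ψ' h => MonoidHom.ext fun g => congrArg Subtype.val (congrFun h g)
  rw [Polynomial.mem_nthRootsFinset Nat.card_pos, ← map_pow, pow_card_eq_one', map_one]

section QuotientChar

variable {H : Type*} [Group H] (N : Subgroup H)

abbrev QuotientChar := {ψ : H →* ℂ // ∀ n ∈ N, ψ n = 1}

noncomputable instance [Finite H] : Fintype (QuotientChar N) := Fintype.ofFinite _

variable [N.Normal]

def quotientCharEquiv : (H ⧸ N →* ℂ) ≃ QuotientChar N where
  toFun χ := ⟨χ.comp (QuotientGroup.mk' N), fun n hn => by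
    simp [(QuotientGroup.eq_one_iff n).mpr hn]⟩
  invFun ψ := QuotientGroup.lift N ψ.1 fun n hn => ψ.2 n hn
  left_inv χ := QuotientGroup.monoidHom_ext N (by ext; rfl)
  right_inv ψ := by ext; rfl

open scoped Classical in
lemma sum_quotientChar_apply [Finite H] (hab : ∀ a b : H ⧸ N, a * b = b * a) (x : H) :
    ∑ ψ : QuotientChar N, ψ.1 x = if x ∈ N then (N.index : ℂ) else 0 := by
  let : CommGroup (H ⧸ N) := { mul_comm := hab }
  let : Fintype (H ⧸ N) := Fintype.ofFinite _
  calc ∑ ψ : QuotientChar N, ψ.1 x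
      = ∑ φ : AddChar (Additive (H ⧸ N)) ℂ, φ (Additive.ofMul (x : H ⧸ N)) :=
      (Fintype.sum_equiv ((AddChar.toMonoidHomEquiv (A := Additive (H ⧸ N)) (M := ℂ)).trans
        (quotientCharEquiv N)) _ _ fun _ => rfl).symm
    _ = if x ∈ N then (N.index : ℂ) else 0 := by
      rw [AddChar.sum_apply_eq_ite]
      simp [QuotientGroup.eq_one_iff, Subgroup.index, Nat.card_eq_fintype_card]

lemma ite_mk_eq_mk_eq_sum [Finite H] [DecidableEq (H ⧸ N)] (hab : ∀ a b : H ⧸ N, a * b = b * a)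
    (a y : H) :
    (if (y : H ⧸ N) = a then (1 : ℂ) else 0) =
      (N.index : ℂ)⁻¹ * ∑ ψ : QuotientChar N, conj (ψ.1 a) * ψ.1 y := by
  have hindex : (N.index : ℂ) ≠ 0 := Nat.cast_ne_zero.mpr Subgroup.index_ne_zero_of_finite
  simp_rw [← MonoidHom.map_inv_eq_conj, ← map_mul, sum_quotientChar_apply N hab, ← QuotientGroup.eq,
    eq_comm (a := (y : H ⧸ N))]
  split_ifs <;> simp [hindex]

end QuotientChar

lemma MonoidHom.apply_eq_apply_of_mk_eq {H M : Type*} [Group H] [Monoid M] {N : Subgroup H}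
    {ψ ψ' : H →* M} (hψ : ∀ n ∈ N, ψ n = 1) (hψ' : ∀ n ∈ N, ψ' n = 1) {x y : H}
    (hxy : (x : H ⧸ N) = y) (h : ψ x = ψ' x) : ψ y = ψ' y := by
  have hn : x⁻¹ * y ∈ N := QuotientGroup.eq.mp hxy
  calc ψ y = ψ x * ψ (x⁻¹ * y) := by rw [← map_mul, mul_inv_cancel_left]
    _ = ψ' x * ψ' (x⁻¹ * y) := by rw [hψ _ hn, hψ' _ hn, h]
    _ = ψ' y := by rw [← map_mul, mul_inv_cancel_left]

section Twisting

variable {H : Type*} [Group H] {N : Subgroup H} {f g : H → ℂ} {ψ₀ : H →* ℂ}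

noncomputable def twistingEquiv (hψ₀ : ∀ n ∈ N, ψ₀ n = 1) (hg : ∀ y, g y = ψ₀ y * f y) :
    {ψ : H →* ℂ // (∀ n ∈ N, ψ n = 1) ∧ ∀ y, ψ y * f y = f y} ≃
      {ψ : QuotientChar N // ∀ y, g y = ψ.1 y * f y} where
  toFun ψ := ⟨⟨ψ₀ * ψ.1, fun n hn => by simp [hψ₀ n hn, ψ.2.1 n hn]⟩,
    fun y => by rw [hg y, MonoidHom.mul_apply, mul_assoc, ψ.2.2 y]⟩
  invFun ψ := ⟨invMonoidHom.comp ψ₀ * ψ.1.1,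
    fun n hn => by simp [hψ₀ n hn, ψ.1.2 n hn], fun y => by
      rw [MonoidHom.mul_apply, mul_assoc, ← ψ.2 y, hg y, MonoidHom.comp_apply, invMonoidHom_apply,
        inv_mul_cancel_left₀ ((Group.isUnit y).map ψ₀).ne_zero]⟩
  left_inv ψ := Subtype.ext <| MonoidHom.ext fun y =>
    inv_mul_cancel_left₀ ((Group.isUnit y).map ψ₀).ne_zero (ψ.1 y)
  right_inv ψ := Subtype.ext <| Subtype.ext <| MonoidHom.ext fun y =>
    mul_inv_cancel_left₀ ((Group.isUnit y).map ψ₀).ne_zero (ψ.1.1 y)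

lemma sum_ite_eq_conj_mul_card [Fintype H] (hψ₀ : ∀ n ∈ N, ψ₀ n = 1)
    (hg : ∀ y, g y = ψ₀ y * f y) {a y₀ : H} (hy₀ : (y₀ : H ⧸ N) = a) (hf : f y₀ ≠ 0) :
    ∑ ψ : QuotientChar N, (if ∀ y, g y = ψ.1 y * f y then conj (ψ.1 a) else 0) =
      conj (ψ₀ a) * Nat.card {ψ : H →* ℂ // (∀ n ∈ N, ψ n = 1) ∧ ∀ y, ψ y * f y = f y} := by
  have hval : ∀ ψ : QuotientChar N, (∀ y, g y = ψ.1 y * f y) → ψ.1 a = ψ₀ a := fun ψ hψ =>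
    MonoidHom.apply_eq_apply_of_mk_eq ψ.2 hψ₀ hy₀
      (mul_right_cancel₀ hf ((hψ y₀).symm.trans (hg y₀)))
  rw [← sum_filter, sum_congr rfl fun ψ hψ => congrArg conj (hval ψ (mem_filter.mp hψ).2),
    sum_const, nsmul_eq_mul, mul_comm, Nat.card_congr (twistingEquiv hψ₀ hg),
    Nat.card_eq_fintype_card, Fintype.card_subtype]

end Twisting

lemma coset_inner_char_eq_sum {H : Type} [Group H] [Fintype H] (N : Subgroup H) [N.Normal]
    [DecidableEq (H ⧸ N)] (hab : ∀ a b : H ⧸ N, a * b = b * a) (V W : FDRep ℂ H) [Simple V]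
    [Simple W] (a : H) :
    (Nat.card N : ℂ)⁻¹ *
        ∑ y : H, (if (y : H ⧸ N) = a then V.character y * conj (W.character y) else 0) =
      ∑ ψ : QuotientChar N,
        if ∀ y, W.character y = ψ.1 y * V.character y then conj (ψ.1 a) else 0 := by
  have hcard : (Nat.card H : ℂ) = Nat.card N * N.index := by
    rw [← Subgroup.card_mul_index N, Nat.cast_mul]
  calc (Nat.card N : ℂ)⁻¹ *
        ∑ y : H, (if (y : H ⧸ N) = a then V.character y * conj (W.character y) else 0)
      = (Nat.card H : ℂ)⁻¹ * ∑ ψ : QuotientChar N,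
          conj (ψ.1 a) * ∑ y, ψ.1 y * V.character y * W.character y⁻¹ := by
        have hterm : ∀ y : H,
            (if (y : H ⧸ N) = a then V.character y * conj (W.character y) else 0) =
            (N.index : ℂ)⁻¹ * ∑ ψ : QuotientChar N,
              conj (ψ.1 a) * (ψ.1 y * V.character y * W.character y⁻¹) := by
          intro y
          rw [← boole_mul, ite_mk_eq_mk_eq_sum N hab, FDRep.char_inv_eq_conj, mul_assoc, sum_mul]
          exact congrArg _ (sum_congr rfl fun _ _ => by ring)
        simp_rw [hterm, ← mul_sum, hcard, mul_inv, mul_assoc]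
        rw [sum_comm]
        simp_rw [mul_sum]
    _ = _ := by
        simp_rw [FDRep.sum_mul_char_mul_char_inv, mul_sum, mul_ite, mul_zero]
        refine sum_congr rfl fun ψ _ => ?_
        split_ifs <;> field_simp

/-- Inner product formula for characters on a coset (Lemma `lm-group-theory` (1) of
Kowalski, "The principle of the large sieve").  `H` is a finite group, `N ◁ H` with
abelian quotient `Γ = H/N`, `α ∈ Γ`, and the inner product is
`⟨f,g⟩ = |N|⁻¹ ∑_{y ↦ α} f(y) conj(g(y))`.  Characters `ψ` of `Γ` are represented by
homomorphisms `H →* ℂ` trivial on `N`, and `π ⊗ ψ ≅ τ` by the character identity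
`χ_τ = ψ · χ_π`. -/
theorem coset_character_inner_product
    {H : Type} [Group H] [Fintype H]
    (N : Subgroup H) [N.Normal] [DecidableEq (H ⧸ N)]
    (hab : ∀ a b : H ⧸ N, a * b = b * a)
    (α : H ⧸ N)
    (V W : FDRep ℂ H) [Simple V] [Simple W] :
    -- vanishing case: restrictions to `N` not isomorphic, or `χ_V` vanishes on `Y`
    (((∃ n : H, n ∈ N ∧ V.character n ≠ W.character n) ∨
        (∀ y : H, (QuotientGroup.mk y : H ⧸ N) = α → V.character y = 0)) →
      (Nat.card N : ℂ)⁻¹ *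
          ∑ y : H, (if (QuotientGroup.mk y : H ⧸ N) = α
            then V.character y * (starRingEnd ℂ) (W.character y) else 0)
        = 0)
    ∧
    -- main case: `τ ≅ π ⊗ ψ` and `χ_V` does not vanish identically on `Y`
    (∀ ψ : H →* ℂ, (∀ n ∈ N, ψ n = 1) →
      (∀ y : H, W.character y = ψ y * V.character y) →
      (∃ y : H, (QuotientGroup.mk y : H ⧸ N) = α ∧ V.character y ≠ 0) →
      ∀ a : H, (QuotientGroup.mk a : H ⧸ N) = α →
      (Nat.card N : ℂ)⁻¹ *
          ∑ y : H, (if (QuotientGroup.mk y : H ⧸ N) = α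
            then V.character y * (starRingEnd ℂ) (W.character y) else 0)
        = (starRingEnd ℂ) (ψ a) *
          (Nat.card {ψ' : H →* ℂ // (∀ n ∈ N, ψ' n = 1) ∧
            ∀ y : H, ψ' y * V.character y = V.character y} : ℂ)) := by
  refine ⟨?_, fun ψ hψN hψ ⟨y₀, hy₀, hV⟩ a ha => ?_⟩
  · rintro (⟨n, hn, hne⟩ | hzero)
    · obtain ⟨a, rfl⟩ := QuotientGroup.mk_surjective α
      rw [coset_inner_char_eq_sum N hab V W a]
      refine sum_eq_zero fun ψ _ => if_neg fun h => hne ?_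
      rw [h n, ψ.2 n hn, one_mul]
    · rw [sum_eq_zero fun y _ => ?_, mul_zero]
      split_ifs with hy
      · rw [hzero y hy, zero_mul]
      · rfl
  · subst ha
    rw [coset_inner_char_eq_sum N hab V W a, sum_ite_eq_conj_mul_card hψN hψ hy₀ hV]
end

section
/- Monotonicity of representation degree sums: let G be a finite group, H ≤ G a subgroup, and p ∈ [1,∞). Then (∑_{ρ ∈ Irr(H)} (dim ρ)^p)^{1/p} ≤ (∑_{π ∈ Irr(G)} (dim π)^p)^{1/p}. Also the maximal degree of an irreducible representation of H is at most the maximal degree of an irreducible representation of G. -/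
/-!
Send each irreducible representation `ρ` of `H` to an irreducible representation `π(ρ)` of `G`
admitting a nonzero `H`-map `ρ → Res π(ρ)`: `ρ` maps nontrivially into the restriction of the
regular representation of `G`, and by Maschke's theorem such a map survives the projection
onto a suitable irreducible summand. On the other hand, by Maschke and Schur, pairwise
non-isomorphic irreducibles with nonzero maps into a representation `W` split off from `W` one
after the other, so their dimensions add up to at most `dim W`. Hence
`∑_{π(ρ) = π} dim ρ ≤ dim π` for every `π`, which gives both inequalities because `x ↦ x ^ p`
is superadditive on `[0, ∞)` for `p ≥ 1`.
-/

open CategoryTheory Finset Representation Module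

universe u

namespace Representation

section Monoid

variable {k G H V W Z : Type*} [Field k] [Monoid G] [Monoid H] [AddCommGroup V] [Module k V]
  [AddCommGroup W] [Module k W] [AddCommGroup Z] [Module k Z]
  {ρ : Representation k G V} {σ : Representation k G W} {τ : Representation k G Z}

def Subrepresentation.subtype (U : Subrepresentation σ) :
    IntertwiningMap U.toRepresentation σ where
  toLinearMap := U.toSubmodule.subtype
  isIntertwining' _ := rfl

namespace IntertwiningMap

def res (φ : H →* G) (f : IntertwiningMap σ τ) : IntertwiningMap (σ.comp φ) (τ.comp φ) where
  toLinearMap := f.toLinearMap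
  isIntertwining' h := f.isIntertwining' (φ h)

def codRestrict (f : IntertwiningMap ρ σ) (U : Subrepresentation σ) (h : ∀ v, f v ∈ U) :
    IntertwiningMap ρ U.toRepresentation where
  toLinearMap := f.toLinearMap.codRestrict U.toSubmodule h
  isIntertwining' g := by ext v; exact isIntertwining _ _ f g v

theorem codRestrict_ne_zero {f : IntertwiningMap ρ σ} (hf : f ≠ 0) (U : Subrepresentation σ)
    (h : ∀ v, f v ∈ U) : f.codRestrict U h ≠ 0 := fun h0 => hf <| by
  ext v; exact congrArg Subtype.val (DFunLike.congr_fun h0 v)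

theorem comp_ne_zero {f : IntertwiningMap σ τ} (hf : Function.Injective f)
    {g : IntertwiningMap ρ σ} (hg : g ≠ 0) : f.comp g ≠ 0 := fun h => hg <| by
  ext v; exact hf (by simpa using DFunLike.congr_fun h v)

theorem finrank_add_finrank_ker [FiniteDimensional k W] {f : IntertwiningMap ρ σ}
    {g : IntertwiningMap σ ρ} (hgf : g.comp f = .id ρ) :
    finrank k V + finrank k g.ker.toSubmodule = finrank k W := by
  have hg : Function.Surjective g := fun v => ⟨f v, DFunLike.congr_fun hgf v⟩
  rw [← LinearMap.finrank_range_add_finrank_ker g.toLinearMap, LinearMap.range_eq_top.2 hg,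
    finrank_top]
  rfl

end IntertwiningMap

end Monoid

section FiniteGroup

variable {k G W : Type*} [Field k] [Group G] [Finite G] [NeZero (Nat.card G : k)]
  [AddCommGroup W] [Module k W]

theorem IntertwiningMap.exists_leftInverse_of_injective {V : Type*} [AddCommGroup V] [Module k V]
    {ρ : Representation k G V} {σ : Representation k G W} (f : IntertwiningMap ρ σ)
    (hf : Function.Injective f) : ∃ g : IntertwiningMap σ ρ, g.comp f = .id ρ := by
  obtain ⟨g, hg⟩ := MonoidAlgebra.exists_leftInverse_of_injective (equivLinearMapAsModule ρ σ f)
    (LinearMap.ker_eq_bot.mpr hf)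
  exact ⟨(equivLinearMapAsModule σ ρ).symm g,
    IntertwiningMap.ext (LinearMap.ext fun v => DFunLike.congr_fun hg v)⟩

theorem sum_finrank_le_finrank {ι : Type*} {V : ι → Type*} [∀ i, AddCommGroup (V i)]
    [∀ i, Module k (V i)] (ρ : ∀ i, Representation k G (V i)) [∀ i, (ρ i).IsIrreducible]
    (hρ : Pairwise fun i j => IsEmpty ((ρ i).Equiv (ρ j))) (s : Finset ι)
    [FiniteDimensional k W] (σ : Representation k G W)
    (hs : ∀ i ∈ s, Nontrivial (IntertwiningMap (ρ i) σ)) :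
    ∑ i ∈ s, finrank k (V i) ≤ finrank k W := by
  classical
  induction s using Finset.induction_on generalizing W with
  | empty => simp
  | insert a s ha ih =>
    have := hs a (mem_insert_self a s)
    obtain ⟨f, hf⟩ := exists_ne (0 : IntertwiningMap (ρ a) σ)
    obtain ⟨g, hgf⟩ := f.exists_leftInverse_of_injective
      ((IsIrreducible.injective_or_eq_zero f).resolve_right hf)
    have hker (j) (hj : j ∈ s) : Nontrivial (IntertwiningMap (ρ j) g.ker.toRepresentation) := by
      have := hs j (mem_insert_of_mem hj)
      obtain ⟨fj, hfj⟩ := exists_ne (0 : IntertwiningMap (ρ j) σ)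
      have : IsEmpty ((ρ j).Equiv (ρ a)) := hρ (ne_of_mem_of_not_mem hj ha)
      -- Schur's lemma
      have hgfj : g.comp fj = 0 := Subsingleton.elim _ _
      exact ⟨_, 0, fj.codRestrict_ne_zero hfj _ fun v => DFunLike.congr_fun hgfj v⟩
    rw [sum_insert ha, ← IntertwiningMap.finrank_add_finrank_ker hgf]
    exact Nat.add_le_add_left (ih _ hker) _

end FiniteGroup

theorem nontrivial_intertwiningMap_leftRegular_comp_subtype {k G V : Type*} [Field k] [Group G]
    [AddCommGroup V] [Module k V] [Nontrivial V] (H : Subgroup G) [Finite H]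
    (ρ : Representation k H V) :
    Nontrivial (IntertwiningMap ρ ((leftRegular k G).comp H.subtype)) := by
  classical
  have := Fintype.ofFinite H
  obtain ⟨v, hv⟩ := exists_ne (0 : V)
  obtain ⟨φ, hφ⟩ := Projective.exists_dual_ne_zero k hv
  let T : V →ₗ[k] MonoidAlgebra k G :=
    ∑ h : H, (MonoidAlgebra.lsingle (h : G)).comp (φ ∘ₗ ρ h⁻¹)
  have hT (w : V) : T w = ∑ h : H, MonoidAlgebra.single (h : G) (φ (ρ h⁻¹ w)) := by simp [T]
  refine ⟨⟨⟨T, fun h₀ => LinearMap.ext fun w => ?_⟩, 0, fun h0 => hφ ?_⟩⟩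
  · simp only [LinearMap.comp_apply, hT, map_sum, MonoidHom.comp_apply, Subgroup.coe_subtype,
      ofMulAction_single, smul_eq_mul]
    refine Fintype.sum_bijective (h₀⁻¹ * ·) (Group.mulLeft_bijective h₀⁻¹) _ _ fun h => ?_
    simp [← Module.End.mul_apply, ← map_mul]
  · -- the coefficient of `T v` at `1` is `φ v ≠ 0`
    have := congrArg (MonoidAlgebra.coeff · 1)
      (DFunLike.congr_fun (congrArg IntertwiningMap.toLinearMap h0) v)
    simpa [hT, MonoidAlgebra.coeff_sum, Finsupp.finsetSum_apply, Finsupp.single_apply] using this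

end Representation

theorem Rep.simple_iff_isIrreducible {k G : Type*} [Field k] [Monoid G] (A : Rep k G) :
    Simple A ↔ A.ρ.IsIrreducible := by
  rw [← simple_obj_iff equivalenceModuleMonoidAlgebra.functor,
    irreducible_iff_isSimpleModule_asModule]
  exact simple_iff_isSimpleModule

namespace FDRep

variable {k : Type u} [Field k]

section Monoid

variable {G : Type*} [Monoid G]

theorem simple_of_isIrreducible {V : Type u} [AddCommGroup V] [Module k V] [FiniteDimensional k V]
    (σ : Representation k G V) [σ.IsIrreducible] : Simple (FDRep.of σ) :=
  have : Simple ((forget₂ (FDRep k G) (Rep.{u} k G)).obj (FDRep.of σ)) :=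
    (Rep.simple_iff_isIrreducible (Rep.of σ)).2 ‹_›
  Functor.simple_of_simple_obj (forget₂ (FDRep k G) (Rep.{u} k G)) _

theorem isIrreducible_of_simple (X : FDRep k G) [Simple X] : Representation.IsIrreducible X.ρ := by
  have key (U : Subrepresentation X.ρ) : U = ⊤ ↔ U ≠ ⊥ := by
    let F := forget₂ (FDRep k G) (Rep.{u} k G)
    let ι : FDRep.of U.toRepresentation ⟶ X :=
      F.preimage (Rep.ofHom (X := U.toSubmodule) (Y := X) U.subtype)
    have hι : (F.map ι).hom = U.subtype := congrArg Rep.Hom.hom (F.map_preimage _)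
    have : Mono ι := F.mono_of_mono_map <| (Rep.mono_iff_injective _).2 <| by
      rw [hι]; exact Subtype.val_injective
    have htop : IsIso ι ↔ U = ⊤ := by
      rw [← isIso_iff_of_reflects_iso ι F, ConcreteCategory.isIso_iff_bijective]
      change Function.Bijective (F.map ι).hom ↔ _
      rw [hι, ← Subrepresentation.toSubmodule_injective.eq_iff]
      change Function.Bijective U.toSubmodule.subtype ↔ U.toSubmodule = ⊤
      rw [Function.Bijective, and_iff_right U.toSubmodule.injective_subtype,
        ← LinearMap.range_eq_top, Submodule.range_subtype]
    have hbot : ι = 0 ↔ U = ⊥ := by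
      rw [← F.map_eq_zero_iff, ← Rep.hom_injective.eq_iff, hι, Rep.zero_hom,
        ← Subrepresentation.toSubmodule_injective.eq_iff]
      change _ ↔ U.toSubmodule = ⊥
      refine ⟨fun h => (Submodule.eq_bot_iff _).2 fun x hx =>
        DFunLike.congr_fun h (⟨x, hx⟩ : U.toSubmodule), fun h => ?_⟩
      ext x
      exact (Submodule.mem_bot k).1 (h ▸ x.2)
    rw [← htop, Simple.mono_isIso_iff_nonzero, ne_eq, hbot]
  have : Nontrivial (Subrepresentation X.ρ) := ⟨⊥, ⊤, fun h => (key ⊤).1 rfl h.symm⟩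
  exact IsSimpleOrder.of_forall_eq_top fun U => (key U).2

noncomputable def equivOfIso {X Y : FDRep k G} (e : X ≅ Y) : Representation.Equiv X.ρ Y.ρ :=
  Representation.equivOfIso ((forget₂ (FDRep k G) (Rep.{u} k G)).mapIso e)

noncomputable def isoOfEquiv {X Y : FDRep k G} (e : Representation.Equiv X.ρ Y.ρ) : X ≅ Y :=
  (forget₂ (FDRep k G) (Rep.{u} k G)).preimageIso (Rep.mkIso e)

end Monoid

variable {G : Type u} [Group G] [Finite G] [NeZero (Nat.card G : k)]

theorem exists_simple_nontrivial_intertwiningMap_comp {H V : Type*} [Monoid H] [AddCommGroup V]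
    [Module k V] (φ : H →* G) (τ : Representation k H V) {W : Type u} [AddCommGroup W]
    [Module k W] [FiniteDimensional k W] (σ : Representation k G W)
    (hσ : Nontrivial (IntertwiningMap τ (σ.comp φ))) :
    ∃ X : FDRep k G, Simple X ∧ Nontrivial (IntertwiningMap τ (X.ρ.comp φ)) := by
  induction hn : finrank k W using Nat.strong_induction_on generalizing W with
  | _ n ih =>
  subst hn
  by_cases hirr : σ.IsIrreducible
  · exact ⟨FDRep.of σ, simple_of_isIrreducible σ, hσ⟩
  obtain ⟨T, hT⟩ := exists_ne (0 : IntertwiningMap τ (σ.comp φ))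
  obtain ⟨U, hU_bot, hU_top⟩ : ∃ U : Subrepresentation σ, U ≠ ⊥ ∧ U ≠ ⊤ := by
    obtain ⟨v, hv⟩ : ∃ v, T v ≠ 0 := by
      by_contra! h
      exact hT (IntertwiningMap.ext (LinearMap.ext h))
    have : Nontrivial W := nontrivial_of_ne _ _ hv
    have : Nontrivial (Subrepresentation σ) :=
      ⟨⊥, ⊤, fun h => bot_ne_top (congrArg Subrepresentation.toSubmodule h)⟩
    by_contra! h
    exact hirr (IsSimpleOrder.of_forall_eq_top h)
  have hU_pos : finrank k U.toSubmodule ≠ 0 := fun h =>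
    hU_bot (Subrepresentation.toSubmodule_injective (Submodule.finrank_eq_zero.1 h))
  have hU_lt : finrank k U.toSubmodule < finrank k W :=
    Submodule.finrank_lt fun h => hU_top (Subrepresentation.toSubmodule_injective h)
  -- `W = U ⊕ ker r`; `T` either survives the projection `r` onto `U` or lands in `ker r`
  obtain ⟨r, hr⟩ := U.subtype.exists_leftInverse_of_injective U.toSubmodule.injective_subtype
  have hdim := IntertwiningMap.finrank_add_finrank_ker hr
  by_cases hrT : (r.res φ).comp T = 0
  · exact ih _ (by omega) r.ker.toRepresentation
      ⟨_, 0, T.codRestrict_ne_zero hT (r.res φ).ker fun v => DFunLike.congr_fun hrT v⟩ rfl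
  · exact ih _ hU_lt U.toRepresentation ⟨_, 0, hrT⟩ rfl

theorem exists_nontrivial_intertwiningMap_comp_subtype {ι : Type*} (R : ι → FDRep k G)
    (hR : ∀ X : FDRep k G, Simple X → ∃ i, Nonempty (R i ≅ X)) (H : Subgroup G) (Y : FDRep k H)
    [Simple Y] : ∃ i, Nontrivial (IntertwiningMap Y.ρ ((R i).ρ.comp H.subtype)) := by
  have := isIrreducible_of_simple Y
  have : Nontrivial Y := IsSimpleModule.nontrivial (MonoidAlgebra k H) (Representation.asModule Y.ρ)
  obtain ⟨X, hX, hYX⟩ := exists_simple_nontrivial_intertwiningMap_comp H.subtype Y.ρ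
    (leftRegular k G) (nontrivial_intertwiningMap_leftRegular_comp_subtype H _)
  obtain ⟨f, hf⟩ := exists_ne (0 : IntertwiningMap Y.ρ (X.ρ.comp H.subtype))
  obtain ⟨i, ⟨e⟩⟩ := hR X hX
  let e' := equivOfIso e.symm
  exact ⟨i, _, 0, (e'.toIntertwiningMap.res H.subtype).comp_ne_zero e'.injective hf⟩

end FDRep

theorem Real.sum_rpow_le_rpow_sum {ι : Type*} (s : Finset ι) {f : ι → ℝ}
    (hf : ∀ i ∈ s, 0 ≤ f i) {p : ℝ} (hp : 1 ≤ p) : ∑ i ∈ s, f i ^ p ≤ (∑ i ∈ s, f i) ^ p := by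
  classical
  induction s using Finset.induction_on with
  | empty => simp [Real.zero_rpow (by linarith : p ≠ 0)]
  | insert a s ha ih =>
    have hs (i) (hi : i ∈ s) : 0 ≤ f i := hf i (mem_insert_of_mem hi)
    rw [sum_insert ha, sum_insert ha]
    calc f a ^ p + ∑ i ∈ s, f i ^ p ≤ f a ^ p + (∑ i ∈ s, f i) ^ p := by gcongr; exact ih hs
      _ ≤ (f a + ∑ i ∈ s, f i) ^ p :=
        Real.add_rpow_le_rpow_add (hf a (mem_insert_self a s)) (sum_nonneg hs) hp

namespace Finset

variable {ι κ : Type*} [Fintype ι] [Fintype κ] [DecidableEq κ] (π : ι → κ)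

theorem sum_rpow_le_sum_rpow_of_sum_fiberwise_le {a : ι → ℝ} {b : κ → ℝ} (ha : ∀ i, 0 ≤ a i)
    (hab : ∀ j, ∑ i with π i = j, a i ≤ b j) {p : ℝ} (hp : 1 ≤ p) :
    ∑ i, a i ^ p ≤ ∑ j, b j ^ p := by
  rw [← sum_fiberwise univ π]
  gcongr with j
  calc ∑ i with π i = j, a i ^ p ≤ (∑ i with π i = j, a i) ^ p :=
        Real.sum_rpow_le_rpow_sum _ (fun i _ => ha i) hp
    _ ≤ b j ^ p := Real.rpow_le_rpow (sum_nonneg fun i _ => ha i) (hab j) (by linarith)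

theorem sup_le_sup_of_sum_fiberwise_le {a : ι → ℕ} {b : κ → ℕ}
    (hab : ∀ j, ∑ i with π i = j, a i ≤ b j) : univ.sup a ≤ univ.sup b :=
  Finset.sup_le fun i _ => calc
    a i ≤ ∑ i' with π i' = π i, a i' :=
      single_le_sum (fun _ _ => Nat.zero_le _) (mem_filter.2 ⟨mem_univ i, rfl⟩)
    _ ≤ b (π i) := hab (π i)
    _ ≤ univ.sup b := le_sup (mem_univ _)

end Finset

theorem degree_sum_monotone_general
    {G : Type} [Group G] [Fintype G] (H : Subgroup G)
    {ιG ιH : Type} [Fintype ιG] [Fintype ιH]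
    (RG : ιG → FDRep ℂ G) (RH : ιH → FDRep ℂ H)
    (hGsurj : ∀ V : FDRep ℂ G, Simple V → ∃ i, Nonempty (RG i ≅ V))
    (hHsimple : ∀ i, Simple (RH i))
    (hHinj : ∀ i j, Nonempty (RH i ≅ RH j) → i = j)
    (p : ℝ) (hp : 1 ≤ p) :
    (∑ i, (Module.finrank ℂ (RH i) : ℝ) ^ p) ^ (1 / p)
      ≤ (∑ i, (Module.finrank ℂ (RG i) : ℝ) ^ p) ^ (1 / p)
    ∧ Finset.univ.sup (fun i => Module.finrank ℂ (RH i))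
      ≤ Finset.univ.sup (fun i => Module.finrank ℂ (RG i)) := by
  classical
  have hirr (j) : IsIrreducible (RH j).ρ := have := hHsimple j; FDRep.isIrreducible_of_simple _
  choose π hπ using fun j =>
    have := hHsimple j; FDRep.exists_nontrivial_intertwiningMap_comp_subtype RG hGsurj H (RH j)
  have hfiber (i) : ∑ j with π j = i, finrank ℂ (RH j) ≤ finrank ℂ (RG i) := by
    refine sum_finrank_le_finrank (fun j => (RH j).ρ) (fun j j' hjj' => ?_) _
      ((RG i).ρ.comp H.subtype) fun j hj => ?_
    · exact ⟨fun e => hjj' (hHinj j j' ⟨FDRep.isoOfEquiv e⟩)⟩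
    · obtain rfl := (mem_filter.1 hj).2
      exact hπ j
  exact ⟨Real.rpow_le_rpow (by positivity) (sum_rpow_le_sum_rpow_of_sum_fiberwise_le π
    (fun _ => Nat.cast_nonneg _) (fun i => by exact_mod_cast hfiber i) hp) (by positivity),
    sup_le_sup_of_sum_fiberwise_le π hfiber⟩

/-- Monotonicity of `A_p` (Lemma `lm-incr` of Kowalski, "The principle of the
large sieve"): if `H ≤ G` are finite groups then
`A_p(H) ≤ A_p(G)` for `1 ≤ p < ∞`, and `A_∞(H) ≤ A_∞(G)`.
The irreducible representations are given by complete irredundant families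
`RH`, `RG` of simple objects of `FDRep ℂ H`, `FDRep ℂ G`. -/
theorem degree_sum_monotone
    {G : Type} [Group G] [Fintype G] (H : Subgroup G)
    {ιG ιH : Type} [Fintype ιG] [Fintype ιH]
    (RG : ιG → FDRep ℂ G) (RH : ιH → FDRep ℂ H)
    (hGsimple : ∀ i, Simple (RG i))
    (hGinj : ∀ i j, Nonempty (RG i ≅ RG j) → i = j)
    (hGsurj : ∀ V : FDRep ℂ G, Simple V → ∃ i, Nonempty (RG i ≅ V))
    (hHsimple : ∀ i, Simple (RH i))
    (hHinj : ∀ i j, Nonempty (RH i ≅ RH j) → i = j)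
    (hHsurj : ∀ V : FDRep ℂ H, Simple V → ∃ i, Nonempty (RH i ≅ V))
    (p : ℝ) (hp : 1 ≤ p) :
    (∑ i, (Module.finrank ℂ (RH i) : ℝ) ^ p) ^ (1 / p)
      ≤ (∑ i, (Module.finrank ℂ (RG i) : ℝ) ^ p) ^ (1 / p)
    ∧ Finset.univ.sup (fun i => Module.finrank ℂ (RH i))
      ≤ Finset.univ.sup (fun i => Module.finrank ℂ (RG i)) :=
  degree_sum_monotone_general H RG RH hGsurj hHsimple hHinj p hp
end

section
/- Spectral gap from an odd relation: let π: Γ → U(V) be a unitary representation of a group Γ on a complex inner product space V, S ⊂ Γ a finite symmetric generating set, and M = (1/|S|)∑_{s∈S} π(s). Suppose s_1 ⋯ s_c = 1 in Γ with all s_i ∈ S and c odd. Then for every v ∈ V, ‖v‖² ≤ (c²|S|/2)·⟨(Id + M)v, v⟩; consequently every eigenvalue λ of the self-adjoint operator M satisfies λ ≥ −1 + 2/(c²|S|). -/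
/-!
Write `x i = π(s₁ ⋯ sᵢ) v`, so that `x 0 = x c = v` and `‖x i + x (i+1)‖ = ‖v + π(s_{i+1}) v‖`.
Since `c` is odd, `2v = x 0 + x c` is the alternating sum `∑ (-1)ⁱ (x i + x (i+1))`; the triangle
and Cauchy–Schwarz inequalities then give `4‖v‖² ≤ c² ∑_{s∈S} ‖v + π(s) v‖²`, and the right-hand
side is `2c²|S|·Re⟨(Id + M)v, v⟩`. Evaluating this at an eigenvector gives the eigenvalue bound.
-/

open Finset

theorem norm_add_le_sum_range_norm_add {E : Type*} [SeminormedAddCommGroup E] (x : ℕ → E)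
    {c : ℕ} (hc : Odd c) : ‖x 0 + x c‖ ≤ ∑ i ∈ range c, ‖x i + x (i + 1)‖ := by
  obtain ⟨k, rfl⟩ := hc
  induction k with
  | zero => simp
  | succ k ih =>
    set n := 2 * k + 1
    rw [show 2 * (k + 1) + 1 = n + 1 + 1 by omega, sum_range_succ, sum_range_succ]
    calc ‖x 0 + x (n + 1 + 1)‖
        = ‖(x 0 + x n) - (x n + x (n + 1)) + (x (n + 1) + x (n + 1 + 1))‖ := by congr 1; abel
      _ ≤ ‖x 0 + x n‖ + ‖x n + x (n + 1)‖ + ‖x (n + 1) + x (n + 1 + 1)‖ :=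
        (norm_add_le _ _).trans (add_le_add_left (norm_sub_le _ _) _)
      _ ≤ _ := by linarith

section Representation

variable {𝕜 : Type*} [RCLike 𝕜] {G : Type*} [Group G] {V : Type*} [NormedAddCommGroup V]
  [InnerProductSpace 𝕜 V]

theorem two_mul_norm_le_sum_norm_add_of_prod_eq_one (π : G →* (V ≃ₗᵢ[𝕜] V)) {c : ℕ}
    (hc : Odd c) {w : Fin c → G} (hrel : (List.ofFn w).prod = 1) (v : V) :
    2 * ‖v‖ ≤ ∑ i, ‖v + π (w i) v‖ := by
  set x : ℕ → V := fun i => π ((List.ofFn w).take i).prod v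
  have hx0 : x 0 = v := by simp [x]
  have hxc : x c = v := by simp [x, List.take_of_length_le, hrel]
  have hstep (i : Fin c) : ‖x i + x (i + 1)‖ = ‖v + π (w i) v‖ := by
    have hprod : ((List.ofFn w).take (i + 1)).prod = ((List.ofFn w).take i).prod * w i := by
      rw [List.prod_take_succ _ _ (by simp)]; simp
    simp only [x, hprod, map_mul, LinearIsometryEquiv.coe_mul, Function.comp_apply, ← map_add,
      LinearIsometryEquiv.norm_map]
  calc 2 * ‖v‖ = ‖x 0 + x c‖ := by
        rw [hx0, hxc, ← two_smul ℕ v, RCLike.norm_nsmul 𝕜, nsmul_eq_mul]; simp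
    _ ≤ ∑ i ∈ range c, ‖x i + x (i + 1)‖ := norm_add_le_sum_range_norm_add x hc
    _ = ∑ i, ‖v + π (w i) v‖ := by
      rw [← Fin.sum_univ_eq_sum_range (fun i => ‖x i + x (i + 1)‖)]; simp only [hstep]

variable (π : G →* (V ≃ₗᵢ[𝕜] V)) (S : Finset G)

def markovOperator : V →ₗ[𝕜] V :=
  (S.card : 𝕜)⁻¹ • ∑ s ∈ S, ((π s).toLinearEquiv : V →ₗ[𝕜] V)

theorem markovOperator_apply (v : V) :
    markovOperator π S v = (S.card : 𝕜)⁻¹ • ∑ s ∈ S, π s v := by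
  simp [markovOperator, LinearMap.sum_apply]

theorem norm_add_linearIsometryEquiv_sq (e : V ≃ₗᵢ[𝕜] V) (v : V) :
    ‖v + e v‖ ^ 2 = 2 * (‖v‖ ^ 2 + RCLike.re (inner 𝕜 (e v) v)) := by
  rw [norm_add_sq (𝕜 := 𝕜), e.norm_map, ← inner_re_symm]; ring

theorem sum_norm_add_sq_eq (v : V) :
    ∑ s ∈ S, ‖v + π s v‖ ^ 2 = 2 * S.card * RCLike.re (inner 𝕜 (v + markovOperator π S v) v) := by
  rcases S.eq_empty_or_nonempty with rfl | hS
  · simp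
  have hcard : (S.card : ℝ) ≠ 0 := by exact_mod_cast hS.card_pos.ne'
  have hinv : (S.card : 𝕜)⁻¹ = (((S.card : ℝ)⁻¹ : ℝ) : 𝕜) := by simp
  simp only [norm_add_linearIsometryEquiv_sq, markovOperator_apply, inner_add_left,
    inner_smul_left, sum_inner, ← mul_sum, sum_add_distrib, sum_const, nsmul_eq_mul, map_add,
    inner_self_eq_norm_sq_to_K, map_inv₀, map_natCast]
  rw [hinv, RCLike.re_ofReal_mul, map_sum, ← RCLike.ofReal_pow, RCLike.ofReal_re]
  field_simp

theorem norm_sq_le_mul_re_inner_add_markovOperator {c : ℕ} (hc : Odd c) {w : Fin c → G}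
    (hw : ∀ i, w i ∈ S) (hrel : (List.ofFn w).prod = 1) (v : V) :
    ‖v‖ ^ 2 ≤ ((c : ℝ) ^ 2 * S.card / 2) * RCLike.re (inner 𝕜 (v + markovOperator π S v) v) := by
  set T := ∑ s ∈ S, ‖v + π s v‖ ^ 2
  have hterm (i : Fin c) : ‖v + π (w i) v‖ ^ 2 ≤ T :=
    single_le_sum (f := fun s => ‖v + π s v‖ ^ 2) (fun _ _ => by positivity) (hw i)
  have h : (2 * ‖v‖) ^ 2 ≤ c ^ 2 * T := calc
    (2 * ‖v‖) ^ 2 ≤ (∑ i, ‖v + π (w i) v‖) ^ 2 :=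
      pow_le_pow_left₀ (by positivity) (two_mul_norm_le_sum_norm_add_of_prod_eq_one π hc hrel v) 2
    _ ≤ c * ∑ i, ‖v + π (w i) v‖ ^ 2 := by
      simpa using sq_sum_le_card_mul_sum_sq (s := (univ : Finset (Fin c)))
    _ ≤ c * ∑ _i : Fin c, T := by gcongr with i; exact hterm i
    _ = c ^ 2 * T := by simp; ring
  rw [show T = _ from sum_norm_add_sq_eq π S v] at h
  linarith

theorem markovOperator_isSymmetric (hS : ∀ s ∈ S, s⁻¹ ∈ S) :
    (markovOperator π S).IsSymmetric := by
  intro x y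
  have hadj (s : G) : inner 𝕜 (π s x) y = inner 𝕜 x (π s⁻¹ y) := by
    rw [(π s).inner_map_eq_flip, map_inv, LinearIsometryEquiv.inv_def]
  simp only [markovOperator_apply, inner_smul_left, inner_smul_right, sum_inner, inner_sum,
    map_inv₀, map_natCast, hadj]
  congr 1
  exact sum_nbij' (·⁻¹) (·⁻¹) hS hS (by simp) (by simp) (by simp)

end Representation

theorem neg_one_add_two_div_le_re_of_hasEigenvalue {𝕜 : Type*} [RCLike 𝕜] {V : Type*}
    [NormedAddCommGroup V] [InnerProductSpace 𝕜 V] {T : V →ₗ[𝕜] V} {K : ℝ} (hK : 0 ≤ K)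
    (hT : ∀ v, ‖v‖ ^ 2 ≤ K / 2 * RCLike.re (inner 𝕜 (v + T v) v)) {μ : 𝕜}
    (hμ : Module.End.HasEigenvalue T μ) : -1 + 2 / K ≤ RCLike.re μ := by
  obtain ⟨v, hv⟩ := hμ.exists_hasEigenvector
  have hv0 : 0 < ‖v‖ ^ 2 := by have := norm_pos_iff.mpr hv.2; positivity
  have h := hT v
  rw [hv.apply_eq_smul, inner_add_left, inner_smul_left, inner_self_eq_norm_sq_to_K] at h
  have hre : RCLike.re ((‖v‖ : 𝕜) ^ 2 + (starRingEnd 𝕜) μ * (‖v‖ : 𝕜) ^ 2)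
      = (1 + RCLike.re μ) * ‖v‖ ^ 2 := by
    rw [← RCLike.ofReal_pow, map_add, RCLike.ofReal_re, RCLike.re_mul_ofReal, RCLike.conj_re]
    ring
  rw [hre] at h
  have h1 : 1 ≤ K / 2 * (1 + RCLike.re μ) := by nlinarith
  have hKpos : 0 < K := lt_of_le_of_ne hK (by rintro rfl; norm_num at h1)
  have h2 : 2 / K ≤ 1 + RCLike.re μ := by rw [div_le_iff₀ hKpos]; linarith
  linarith

theorem odd_relation_spectral_gap_general
    {Γ : Type*} [Group Γ] {V : Type*} [NormedAddCommGroup V]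
    [InnerProductSpace ℂ V]
    (π : Γ →* (V ≃ₗᵢ[ℂ] V)) (S : Finset Γ)
    (hsym : ∀ s ∈ S, s⁻¹ ∈ S)
    (c : ℕ) (hodd : Odd c) (w : Fin c → Γ) (hw : ∀ i, w i ∈ S)
    (hrel : (List.ofFn w).prod = 1) :
    (∀ v : V, ‖v‖ ^ 2 ≤ ((c : ℝ) ^ 2 * S.card / 2) *
      (@inner ℂ V _
        (v + ((S.card : ℂ)⁻¹ • ∑ s ∈ S, ((π s).toLinearEquiv : V →ₗ[ℂ] V)) v)
        v).re)
    ∧ ∀ μ : ℂ, Module.End.HasEigenvalue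
        ((S.card : ℂ)⁻¹ • ∑ s ∈ S, ((π s).toLinearEquiv : V →ₗ[ℂ] V)) μ →
      μ.im = 0 ∧ (-1 + 2 / ((c : ℝ) ^ 2 * S.card)) ≤ μ.re := by
  have hbound := norm_sq_le_mul_re_inner_add_markovOperator π S hodd hw hrel
  refine ⟨hbound, fun μ hμ => ⟨?_, ?_⟩⟩
  · exact Complex.conj_eq_iff_im.mp
      ((markovOperator_isSymmetric π S hsym).conj_eigenvalue_eq_self hμ)
  · exact neg_one_add_two_div_le_re_of_hasEigenvalue (by positivity) hbound hμ

/-- Spectral gap from an odd relation (part of the proof of Proposition 9.4 /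
`pr-tau` of Kowalski, "The principle of the large sieve"): if `π` is a unitary
representation of `Γ`, `S` a finite symmetric set, `M = |S|⁻¹ ∑_{s∈S} π(s)` the
averaging operator, and there is a relation `s₁⋯s_c = 1` of odd length `c` with
`sᵢ ∈ S`, then `‖v‖² ≤ (c²|S|/2)⟨(Id+M)v, v⟩` for all `v`, and every eigenvalue
of the self-adjoint operator `M` is real and `≥ −1 + 2/(c²|S|)`. -/
theorem odd_relation_spectral_gap
    {Γ : Type*} [Group Γ] {V : Type*} [NormedAddCommGroup V]
    [InnerProductSpace ℂ V] [FiniteDimensional ℂ V]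
    (π : Γ →* (V ≃ₗᵢ[ℂ] V)) (S : Finset Γ) (hS : S.Nonempty)
    (hsym : ∀ s ∈ S, s⁻¹ ∈ S)
    (c : ℕ) (hodd : Odd c) (w : Fin c → Γ) (hw : ∀ i, w i ∈ S)
    (hrel : (List.ofFn w).prod = 1) :
    (∀ v : V, ‖v‖ ^ 2 ≤ ((c : ℝ) ^ 2 * S.card / 2) *
      (@inner ℂ V _
        (v + ((S.card : ℂ)⁻¹ • ∑ s ∈ S, ((π s).toLinearEquiv : V →ₗ[ℂ] V)) v)
        v).re)
    ∧ ∀ μ : ℂ, Module.End.HasEigenvalue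
        ((S.card : ℂ)⁻¹ • ∑ s ∈ S, ((π s).toLinearEquiv : V →ₗ[ℂ] V)) μ →
      μ.im = 0 ∧ (-1 + 2 / ((c : ℝ) ^ 2 * S.card)) ≤ μ.re :=
  odd_relation_spectral_gap_general π S hsym c hodd w hw hrel
end
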